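/- Let β > 0 and t > 0. For every continuous function f : [0,∞) → ℝ vanishing at infinity, the function p_t^β f(x) := ∫_0^∞ f(y) [ p^D(t,x,y/√2)/√2 + 2 g_{0,√2β}(t, x + y/√2) ] dy + √2 β g_{0,√2β}(t,x) f(0) tends to 0 as x → ∞. (C₀-preservation, part of the Feller property of the sticky Brownian transition semigroup.) -/

import Mathlib

/-!
Both parts of the kernel are dominated by Gaussians: `p^D ≤ p`, and the tail bound
`erfc u ≤ exp (-u²)` for `u ≥ 0` gives `g_{0,γ}(t,x) ≤ γ⁻¹ exp (-x²/(2t))`. Hence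
`|p_t^β f(x)| ≤ C ∫ |f(y)| exp (-(y - √2 x)²/(4t)) dy + C' g_{0,γ}(t,x)`. The integral is the
convolution of a bounded function vanishing at infinity with an integrable kernel, evaluated
at `√2 x`, so it tends to `0` by dominated convergence.
-/

open Real Set MeasureTheory Filter

/-- The complementary error function `erfc(u) = (2/√π) ∫_u^∞ e^{-z²} dz`. -/
noncomputable def erfc (u : ℝ) : ℝ :=
  (2 / Real.sqrt Real.pi) * ∫ z in Set.Ioi u, Real.exp (-z ^ 2)

/-- `g_{0,γ}(t,x) = (1/γ) exp(2x/γ + 2t/γ²) erfc(x/√(2t) + √(2t)/γ)`. -/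
noncomputable def g0 (γ t x : ℝ) : ℝ :=
  (1 / γ) * Real.exp (2 * x / γ + 2 * t / γ ^ 2) *
    erfc (x / Real.sqrt (2 * t) + Real.sqrt (2 * t) / γ)

/-- The Gaussian heat kernel `p(t,x,y) = (2πt)^{-1/2} e^{-(x-y)²/(2t)}`. -/
noncomputable def heatK (t x y : ℝ) : ℝ :=
  (Real.sqrt (2 * Real.pi * t))⁻¹ * Real.exp (-(x - y) ^ 2 / (2 * t))

/-- The heat kernel with Dirichlet boundary condition at `0`:
`p^D(t,x,y) = p(t,x,y) − p(t,x,−y)`. -/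
noncomputable def pD (t x y : ℝ) : ℝ :=
  heatK t x y - heatK t x (-y)

/-- The transition semigroup of sticky Brownian motion on `[0,∞)` with stickiness
parameter `β`, applied to a function `f`. -/
noncomputable def stickyP (β t : ℝ) (f : ℝ → ℝ) (x : ℝ) : ℝ :=
  (∫ y in Set.Ioi (0 : ℝ),
      f y * (pD t x (y / Real.sqrt 2) / Real.sqrt 2
        + 2 * g0 (Real.sqrt 2 * β) t (x + y / Real.sqrt 2)))
    + Real.sqrt 2 * β * g0 (Real.sqrt 2 * β) t x * f 0

open Topology

lemma erfc_nonneg (u : ℝ) : 0 ≤ erfc u :=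
  mul_nonneg (by positivity) (setIntegral_nonneg measurableSet_Ioi fun _ _ => (exp_pos _).le)

lemma setIntegral_Ioi_comp_add_right {E : Type*} [NormedAddCommGroup E] [NormedSpace ℝ E]
    (u : ℝ) (g : ℝ → E) :
    ∫ z in Ioi 0, g (z + u) = ∫ z in Ioi u, g z := by
  rw [← (measurePreserving_add_right volume u).setIntegral_preimage_emb
    (measurableEmbedding_addRight u) g (Ioi u)]
  simp

/-- For `z ≥ u ≥ 0` we have `z² ≥ u² + (z - u)²`, and the half Gaussian integral is `√π / 2`. -/
lemma erfc_le_exp_neg_sq {u : ℝ} (hu : 0 ≤ u) : erfc u ≤ exp (-u ^ 2) := by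
  have hgauss : Integrable fun z : ℝ => exp (-z ^ 2) := by
    simpa using integrable_exp_neg_mul_sq one_pos
  have hle : ∫ z in Ioi u, exp (-z ^ 2) ≤ ∫ z in Ioi u, exp (-u ^ 2) * exp (-(z - u) ^ 2) := by
    refine setIntegral_mono_on hgauss.integrableOn
      ((hgauss.comp_sub_right u).const_mul _).integrableOn measurableSet_Ioi fun z hz => ?_
    rw [← exp_add, exp_le_exp]
    nlinarith [mem_Ioi.mp hz]
  have hhalf : ∫ z in Ioi u, exp (-(z - u) ^ 2) = √π / 2 := by
    rw [← setIntegral_Ioi_comp_add_right]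
    simpa using integral_gaussian_Ioi 1
  calc erfc u ≤ 2 / √π * (exp (-u ^ 2) * (√π / 2)) := by
        rw [← hhalf, ← integral_const_mul]
        exact mul_le_mul_of_nonneg_left hle (by positivity)
    _ = exp (-u ^ 2) := by field_simp

lemma g0_nonneg {γ : ℝ} (hγ : 0 < γ) (t x : ℝ) : 0 ≤ g0 γ t x :=
  mul_nonneg (by positivity) (erfc_nonneg _)

lemma g0_le_exp {γ t x : ℝ} (hγ : 0 < γ) (ht : 0 < t) (hx : 0 ≤ x) :
    g0 γ t x ≤ γ⁻¹ * exp (-x ^ 2 / (2 * t)) := by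
  set s := √(2 * t)
  have hs : 0 < s := sqrt_pos.mpr (by positivity)
  have hs0 : s ≠ 0 := hs.ne'
  have hs2 : s ^ 2 = 2 * t := sq_sqrt (by positivity)
  calc g0 γ t x ≤ 1 / γ * exp (2 * x / γ + 2 * t / γ ^ 2) * exp (-(x / s + s / γ) ^ 2) :=
        mul_le_mul_of_nonneg_left (erfc_le_exp_neg_sq (by positivity)) (by positivity)
    _ = γ⁻¹ * exp (-x ^ 2 / (2 * t)) := by
        rw [one_div, mul_assoc, ← exp_add, ← hs2]
        congr 2
        field_simp
        ring

lemma tendsto_g0_atTop {γ t : ℝ} (hγ : 0 < γ) (ht : 0 < t) : Tendsto (g0 γ t) atTop (𝓝 0) := by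
  have hexp : Tendsto (fun x : ℝ => exp (-x ^ 2 / (2 * t))) atTop (𝓝 0) := by
    simpa only [neg_div, Function.comp_def] using tendsto_exp_neg_atTop_nhds_zero.comp
      ((tendsto_pow_atTop two_ne_zero).atTop_div_const (by positivity : 0 < 2 * t))
  refine squeeze_zero' (.of_forall fun x => g0_nonneg hγ t x) ?_ (by simpa using hexp.const_mul γ⁻¹)
  filter_upwards [eventually_ge_atTop 0] with x hx using g0_le_exp hγ ht hx

lemma pD_nonneg {t x y : ℝ} (ht : 0 < t) (hx : 0 ≤ x) (hy : 0 ≤ y) : 0 ≤ pD t x y := by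
  rw [pD, heatK, heatK, sub_nonneg]
  refine mul_le_mul_of_nonneg_left (exp_le_exp.mpr ?_) (by positivity)
  exact div_le_div_of_nonneg_right (by nlinarith) (by positivity)

lemma pD_le_heatK (t x y : ℝ) : pD t x y ≤ heatK t x y :=
  sub_le_self _ (by unfold heatK; positivity)

lemma neg_sq_sub_div_sqrt_two (t a b : ℝ) :
    -(a - b / √2) ^ 2 / (2 * t) = -(4 * t)⁻¹ * (b - √2 * a) ^ 2 := by
  have h2 : √2 ^ 2 = 2 := sq_sqrt zero_le_two
  have hlin : b - √2 * a = -√2 * (a - b / √2) := by field_simp; ring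
  rw [hlin, mul_pow, neg_sq, h2]
  ring

noncomputable def stickyKernel (β t x y : ℝ) : ℝ :=
  pD t x (y / √2) / √2 + 2 * g0 (√2 * β) t (x + y / √2)

lemma stickyP_eq (β t : ℝ) (f : ℝ → ℝ) (x : ℝ) :
    stickyP β t f x = (∫ y in Ioi 0, f y * stickyKernel β t x y)
      + √2 * β * g0 (√2 * β) t x * f 0 := rfl

lemma abs_stickyKernel_le {β t x y : ℝ} (hβ : 0 < β) (ht : 0 < t) (hx : 0 ≤ x) (hy : 0 ≤ y) :
    |stickyKernel β t x y|
      ≤ ((√(2 * π * t))⁻¹ + 2 * (√2 * β)⁻¹) * exp (-(4 * t)⁻¹ * (y - √2 * x) ^ 2) := by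
  have hγ : 0 < √2 * β := by positivity
  have hy' : 0 ≤ y / √2 := by positivity
  have hheat : pD t x (y / √2) / √2 ≤ (√(2 * π * t))⁻¹ * exp (-(4 * t)⁻¹ * (y - √2 * x) ^ 2) :=
    calc pD t x (y / √2) / √2 ≤ pD t x (y / √2) :=
          div_le_self (pD_nonneg ht hx hy') (one_le_sqrt.mpr one_le_two)
      _ ≤ heatK t x (y / √2) := pD_le_heatK _ _ _
      _ = _ := by rw [heatK, neg_sq_sub_div_sqrt_two]
  have hg0 : g0 (√2 * β) t (x + y / √2) ≤ (√2 * β)⁻¹ * exp (-(4 * t)⁻¹ * (y - √2 * x) ^ 2) :=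
    calc g0 (√2 * β) t (x + y / √2) ≤ (√2 * β)⁻¹ * exp (-(x + y / √2) ^ 2 / (2 * t)) :=
          g0_le_exp hγ ht (by positivity)
      _ = (√2 * β)⁻¹ * exp (-(4 * t)⁻¹ * (y + √2 * x) ^ 2) := by
          have h := neg_sq_sub_div_sqrt_two t (-x) y
          rw [show (-x - y / √2) ^ 2 = (x + y / √2) ^ 2 by ring, mul_neg, sub_neg_eq_add] at h
          rw [h]
      _ ≤ _ := by
          refine mul_le_mul_of_nonneg_left (exp_le_exp.mpr ?_) (by positivity)
          refine mul_le_mul_of_nonpos_left ?_ (by simp only [neg_nonpos]; positivity)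
          nlinarith [mul_nonneg hy (mul_nonneg (sqrt_nonneg 2) hx)]
  have hnonneg : 0 ≤ stickyKernel β t x y :=
    add_nonneg (div_nonneg (pD_nonneg ht hx hy') (sqrt_nonneg 2))
      (mul_nonneg zero_le_two (g0_nonneg hγ t _))
  rw [abs_of_nonneg hnonneg, stickyKernel]
  linarith

lemma exists_abs_le_of_continuousOn_Ici {f : ℝ → ℝ} {a l : ℝ} (hf : ContinuousOn f (Ici a))
    (hfl : Tendsto f atTop (𝓝 l)) : ∃ M, ∀ y ≥ a, |f y| ≤ M := by
  obtain ⟨R, hR⟩ := eventually_atTop.mp (hfl.abs.eventually (gt_mem_nhds (lt_add_one |l|)))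
  obtain ⟨C, hC⟩ := isCompact_Icc.exists_bound_of_continuousOn
    (hf.mono (Icc_subset_Ici_self : Icc a (max a R) ⊆ _))
  refine ⟨max C (|l| + 1), fun y hy => ?_⟩
  rcases le_total y (max a R) with hyR | hyR
  · exact (hC y ⟨hy, hyR⟩).trans (le_max_left _ _)
  · exact (hR y (le_of_max_le_right hyR)).le.trans (le_max_right _ _)

-- Dominated convergence after the substitution `y = c + z`.
theorem tendsto_integral_mul_comp_sub_atTop {g φ : ℝ → ℝ} {M : ℝ} (hg : AEStronglyMeasurable g)
    (hgM : ∀ y, |g y| ≤ M) (hg0 : Tendsto g atTop (𝓝 0)) (hφ : Integrable φ) :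
    Tendsto (fun c => ∫ y, g y * φ (y - c)) atTop (𝓝 0) := by
  have hshift (c : ℝ) : ∫ y, g y * φ (y - c) = ∫ z, g (c + z) * φ z := by
    rw [← integral_add_left_eq_self _ c]
    simp only [add_sub_cancel_left]
  simp only [hshift]
  simpa using tendsto_integral_filter_of_dominated_convergence
    (F := fun c z => g (c + z) * φ z) (f := fun _ => 0) (fun z => M * ‖φ z‖)
    (.of_forall fun c : ℝ => (hg.comp_quasiMeasurePreserving
      (measurePreserving_add_left volume c).quasiMeasurePreserving).mul hφ.1)
    (.of_forall fun c : ℝ => .of_forall fun z => by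
      rw [norm_mul]
      exact mul_le_mul_of_nonneg_right (hgM _) (norm_nonneg _))
    (hφ.norm.const_mul M)
    (.of_forall fun z => by
      simpa using (hg0.comp (tendsto_atTop_add_const_right _ z tendsto_id)).mul_const (φ z))

lemma norm_stickyP_le {β t x : ℝ} (hβ : 0 < β) (ht : 0 < t) {f : ℝ → ℝ} {M : ℝ}
    (hf : AEStronglyMeasurable ((Ioi 0).indicator f)) (hM : ∀ y, |(Ioi 0).indicator f y| ≤ M)
    (hx : 0 ≤ x) :
    ‖stickyP β t f x‖ ≤ ((√(2 * π * t))⁻¹ + 2 * (√2 * β)⁻¹) *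
        (∫ y, |(Ioi 0).indicator f y| * exp (-(4 * t)⁻¹ * (y - √2 * x) ^ 2))
      + √2 * β * g0 (√2 * β) t x * |f 0| := by
  set g := (Ioi (0 : ℝ)).indicator f
  set C := (√(2 * π * t))⁻¹ + 2 * (√2 * β)⁻¹
  have hψ : Integrable fun y => exp (-(4 * t)⁻¹ * (y - √2 * x) ^ 2) :=
    (integrable_exp_neg_mul_sq (by positivity)).comp_sub_right (√2 * x)
  have hint : Integrable fun y => |g y| * exp (-(4 * t)⁻¹ * (y - √2 * x) ^ 2) :=
    hψ.bdd_mul hf.norm (.of_forall fun y => by simpa using hM y)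
  have hpointwise (y : ℝ) : ‖g y * stickyKernel β t x y‖
      ≤ C * (|g y| * exp (-(4 * t)⁻¹ * (y - √2 * x) ^ 2)) := by
    by_cases hy : y ∈ Ioi 0
    · rw [Real.norm_eq_abs, abs_mul, mul_left_comm]
      exact mul_le_mul_of_nonneg_left (abs_stickyKernel_le hβ ht hx (le_of_lt hy)) (abs_nonneg _)
    · simp [g, hy]
  have hintegral : ‖∫ y in Ioi 0, f y * stickyKernel β t x y‖
      ≤ C * ∫ y, |g y| * exp (-(4 * t)⁻¹ * (y - √2 * x) ^ 2) := by
    rw [← integral_indicator measurableSet_Ioi, ← integral_const_mul]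
    simp only [indicator_mul_left]
    exact norm_integral_le_of_norm_le (hint.const_mul C) (.of_forall hpointwise)
  have hatom : ‖√2 * β * g0 (√2 * β) t x * f 0‖ = √2 * β * g0 (√2 * β) t x * |f 0| := by
    rw [Real.norm_eq_abs, abs_mul,
      abs_of_nonneg (mul_nonneg (by positivity) (g0_nonneg (by positivity) t x))]
  rw [stickyP_eq, ← hatom]
  exact (norm_add_le _ _).trans (add_le_add_left hintegral _)

/-- C₀-preservation (part of the Feller property) of the sticky Brownian transition
semigroup: for `β, t > 0` and every continuous `f` on `[0,∞)` vanishing at infinity,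
`p_t^β f (x) → 0` as `x → ∞`. -/
theorem stickyP_tendsto_zero_atTop (β t : ℝ) (hβ : 0 < β) (ht : 0 < t)
    (f : ℝ → ℝ) (hf : ContinuousOn f (Set.Ici 0))
    (hf0 : Filter.Tendsto f Filter.atTop (nhds 0)) :
    Filter.Tendsto (stickyP β t f) Filter.atTop (nhds 0) := by
  obtain ⟨M, hM⟩ := exists_abs_le_of_continuousOn_Ici hf hf0
  set g := (Ioi (0 : ℝ)).indicator f
  have hgM (y : ℝ) : |g y| ≤ M := by
    by_cases hy : y ∈ Ioi 0
    · simpa [g, hy] using hM y (le_of_lt hy)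
    · simpa [g, hy] using (abs_nonneg _).trans (hM 0 le_rfl)
  have hg : AEStronglyMeasurable g := (aestronglyMeasurable_indicator_iff measurableSet_Ioi).mpr
    ((hf.mono Ioi_subset_Ici_self).aestronglyMeasurable measurableSet_Ioi)
  have hg0 : Tendsto (fun y => |g y|) atTop (𝓝 0) := by
    simpa using (hf0.congr' (eventually_gt_atTop 0 |>.mono fun y hy => by simp [g, hy])).abs
  have hconv := (tendsto_integral_mul_comp_sub_atTop hg.norm (fun y => by simpa using hgM y) hg0
    (integrable_exp_neg_mul_sq (by positivity : 0 < (4 * t)⁻¹))).comp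
    (tendsto_id.const_mul_atTop (sqrt_pos.mpr zero_lt_two))
  have hatom := ((tendsto_g0_atTop (γ := √2 * β) (by positivity) ht).const_mul (√2 * β)).mul_const |f 0|
  refine squeeze_zero_norm'
    ((eventually_ge_atTop 0).mono fun x hx => norm_stickyP_le hβ ht hg hgM hx) ?_
  simpa using (hconv.const_mul _).add hatom
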